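/- Fix an integer k ≥ 1 and any c > 0, let p = c/n, and let H be an (n,k,p) Newman–Watts small world. Then there exists β = β(c) ∈ (0,1) such that for all n sufficiently large, P(there exists S ⊆ [n] with |S| > (1−β)n and e(S) ≤ |E(H)|) ≤ (1−β)^n. -/

import Mathlib

open scoped Classical

noncomputable section

/-- The `(n,k)`-ring adjacency on `Fin n` (with mod-`n` arithmetic):
`x` and `y` are adjacent iff `(y-x) mod n ∈ {1,…,k}` (equivalently, in `{-k,…,-1}`). -/
def ringAdj (n k : ℕ) (x y : Fin n) : Prop :=
  x ≠ y ∧ ((y - x).val ≤ k ∨ (x - y).val ≤ k)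

/-- The Newman–Watts small world determined by the Bernoulli coordinates `η`:
the `(n,k)`-ring together with all pairs `{x,y}` with `η s(x,y) = true`. -/
def nwGraph (n k : ℕ) (η : Sym2 (Fin n) → Bool) : SimpleGraph (Fin n) where
  Adj x y := x ≠ y ∧ ((y - x).val ≤ k ∨ (x - y).val ≤ k ∨ η s(x, y) = true)
  symm := by
    constructor
    rintro x y ⟨hne, h⟩
    refine ⟨hne.symm, ?_⟩
    rcases h with h | h | h
    · exact Or.inr (Or.inl h)
    · exact Or.inl h
    · exact Or.inr (Or.inr (by rwa [Sym2.eq_swap]))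
  loopless := by constructor; rintro x ⟨hne, -⟩; exact hne rfl

/-- Product-Bernoulli(`p`) weight of an outcome `η`. -/
def nwWeight (n : ℕ) (p : ℝ) (η : Sym2 (Fin n) → Bool) : ℝ :=
  ∏ e : Sym2 (Fin n), if η e then p else 1 - p

/-- Probability of an event under the product Bernoulli(`p`) measure. -/
def nwPr (n : ℕ) (p : ℝ) (A : (Sym2 (Fin n) → Bool) → Prop) : ℝ :=
  ∑ η : Sym2 (Fin n) → Bool, if A η then nwWeight n p η else 0

/-- Expectation under the product Bernoulli(`p`) measure. -/
def nwExp (n : ℕ) (p : ℝ) (X : (Sym2 (Fin n) → Bool) → ℝ) : ℝ :=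
  ∑ η : Sym2 (Fin n) → Bool, nwWeight n p η * X η

variable {V : Type*} [Fintype V] [DecidableEq V]

/-- Degree of `v` in `G`. -/
def gdeg (G : SimpleGraph V) (v : V) : ℕ :=
  (Finset.univ.filter fun u => G.Adj v u).card

/-- Number of edges of `G`. -/
def edgeCount (G : SimpleGraph V) : ℕ := (∑ v, gdeg G v) / 2

/-- `e(S,Sᶜ)`: number of edges with one endpoint in `S`, the other outside. -/
def eCross (G : SimpleGraph V) (S : Finset V) : ℕ :=
  ∑ x ∈ S, ∑ y ∈ Sᶜ, if G.Adj x y then 1 else 0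

/-- `e(S) = Σ_{v∈S} deg v`. -/
def eTot (G : SimpleGraph V) (S : Finset V) : ℕ := ∑ x ∈ S, gdeg G x

/-- `e(S,S)`: number of edges with both endpoints in `S`. -/
def eIn (G : SimpleGraph V) (S : Finset V) : ℕ :=
  (∑ x ∈ S, ∑ y ∈ S, if G.Adj x y then 1 else 0) / 2

/-- `S` is connected if the induced subgraph `G[S]` is connected. -/
def connectedSet (G : SimpleGraph V) (S : Finset V) : Prop :=
  (G.induce (S : Set V)).Connected

/-- One step of the lazy simple random walk applied to a distribution. -/
def lazyStep (G : SimpleGraph V) (μ : V → ℝ) : V → ℝ := fun v =>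
  μ v / 2 + ∑ u ∈ Finset.univ.filter (fun u => G.Adj u v), μ u / (2 * gdeg G u)

/-- Distribution of the lazy simple random walk after `t` steps, started at `x`. -/
def walkDist (G : SimpleGraph V) (x : V) : ℕ → V → ℝ
  | 0 => fun v => if v = x then 1 else 0
  | (t + 1) => lazyStep G (walkDist G x t)

/-- Stationary distribution `π(v) = deg v / (2|E|)`. -/
def statDist (G : SimpleGraph V) (v : V) : ℝ := gdeg G v / (2 * edgeCount G)

/-- Total variation distance. -/
def tvDist (μ ν : V → ℝ) : ℝ := (∑ v, |μ v - ν v|) / 2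

/-- Mixing time `max_x min {t : ‖μ_{t,x} − π‖_TV ≤ 1/4}`. -/
def mixingTime (G : SimpleGraph V) : ℕ :=
  Finset.univ.sup fun x => sInf {t : ℕ | tvDist (walkDist G x t) (statDist G) ≤ 1 / 4}

/-!
Every vertex has exactly `2k` ring neighbours, so `e(S) ≤ |E(H)|` forces `e(S) ≤ e(Sᶜ)`, and
comparing ring degrees shows that the shortcut degrees in `Sᶜ` must sum to at least
`2k(|S| - |Sᶜ|) ≥ n` when `|Sᶜ| < βn ≤ n/4`. Hence at least `n/2` shortcuts touch the small set
`T = Sᶜ`. A union bound over the at most `2ⁿ` sets `T` and over the `(βn²).choose (n/2)` sets of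
`n/2` potential edges touching `T` bounds the probability by `2ⁿ (2eβc)^(n/2)`, which is
exponentially small once `βc` is small.
-/

open Finset

section Probability

variable {n : ℕ} {p : ℝ}

lemma nwWeight_nonneg (hp₀ : 0 ≤ p) (hp₁ : p ≤ 1) (η : Sym2 (Fin n) → Bool) :
    0 ≤ nwWeight n p η :=
  prod_nonneg fun e _ => by split <;> linarith

lemma nwPr_le_sum_of_imp {ι : Type*} (hp₀ : 0 ≤ p) (hp₁ : p ≤ 1)
    {A : (Sym2 (Fin n) → Bool) → Prop} (s : Finset ι) (B : ι → (Sym2 (Fin n) → Bool) → Prop)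
    (h : ∀ η, A η → ∃ i ∈ s, B i η) :
    nwPr n p A ≤ ∑ i ∈ s, nwPr n p (B i) := by
  unfold nwPr
  rw [sum_comm]
  refine sum_le_sum fun η _ => ?_
  have hw := nwWeight_nonneg hp₀ hp₁ η
  split_ifs with hA
  · obtain ⟨i, hi, hB⟩ := h η hA
    calc nwWeight n p η = if B i η then nwWeight n p η else 0 := (if_pos hB).symm
      _ ≤ _ := single_le_sum (f := fun j => if B j η then nwWeight n p η else 0)
          (fun j _ => ite_nonneg hw le_rfl) hi
  · exact sum_nonneg fun j _ => ite_nonneg hw le_rfl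

lemma nwPr_forall_mem_eq_true (p : ℝ) (Q : Finset (Sym2 (Fin n))) :
    nwPr n p (fun η => ∀ e ∈ Q, η e = true) = p ^ #Q := by
  -- the weight of the event factorises over the coordinates once `1 - p` is replaced by `0` on `Q`
  let g : Sym2 (Fin n) → Bool → ℝ := fun e b => if b then p else if e ∈ Q then 0 else 1 - p
  have hg (η : Sym2 (Fin n) → Bool) :
      (if ∀ e ∈ Q, η e = true then nwWeight n p η else 0) = ∏ e, g e (η e) := by
    split_ifs with h
    · refine prod_congr rfl fun e _ => ?_
      by_cases he : e ∈ Q <;> simp [g, he, h]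
    · push Not at h
      obtain ⟨e, he, hηe⟩ := h
      exact (prod_eq_zero (mem_univ e) (by simp [g, he, hηe])).symm
  calc nwPr n p _ = ∑ η : Sym2 (Fin n) → Bool, ∏ e, g e (η e) :=
        sum_congr rfl fun η _ => by convert hg η
    _ = ∏ e, ∑ b, g e b := (Fintype.prod_sum g).symm
    _ = ∏ e, if e ∈ Q then p else 1 := prod_congr rfl fun e _ => by
        by_cases he : e ∈ Q <;> simp [g, he]
    _ = p ^ #Q := by rw [prod_ite_mem, univ_inter, prod_const]

lemma nwPr_le_choose_mul_pow (hp₀ : 0 ≤ p) (hp₁ : p ≤ 1) (s : Finset (Sym2 (Fin n))) (q : ℕ) :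
    nwPr n p (fun η => q ≤ #{e ∈ s | η e = true}) ≤ (#s).choose q * p ^ q := by
  calc _ ≤ ∑ Q ∈ s.powersetCard q, nwPr n p (fun η => ∀ e ∈ Q, η e = true) := by
        refine nwPr_le_sum_of_imp hp₀ hp₁ _ _ fun η hη => ?_
        obtain ⟨Q, hQ, rfl⟩ := exists_subset_card_eq hη
        exact ⟨Q, mem_powersetCard.2 ⟨hQ.trans (filter_subset _ _), rfl⟩,
          fun e he => (mem_filter.1 (hQ he)).2⟩
    _ = (#s).choose q * p ^ q := by
        rw [sum_congr rfl fun Q hQ => by rw [nwPr_forall_mem_eq_true, (mem_powersetCard.1 hQ).2],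
          sum_const, card_powersetCard, nsmul_eq_mul]

end Probability

omit [DecidableEq V] in
lemma gdeg_eq_degree (G : SimpleGraph V) (v : V) : gdeg G v = G.degree v := by
  rw [← G.card_neighborFinset_eq_degree, G.neighborFinset_eq_filter]
  rfl

lemma eTot_le_eTot_compl {G : SimpleGraph V} {S : Finset V} (h : eTot G S ≤ edgeCount G) :
    eTot G S ≤ eTot G Sᶜ := by
  have hsplit : eTot G S + eTot G Sᶜ = ∑ v, gdeg G v := sum_add_sum_compl S _
  rw [edgeCount, ← hsplit] at h
  omega

lemma sum_degree_le_two_mul_card_edges_meeting (G : SimpleGraph V) (T : Finset V) :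
    ∑ x ∈ T, G.degree x ≤ 2 * #{e ∈ G.edgeFinset | ∃ x ∈ T, x ∈ e} := by
  set F := {e ∈ G.edgeFinset | ∃ x ∈ T, x ∈ e}
  calc ∑ x ∈ T, G.degree x = ∑ x ∈ T, #(F.bipartiteAbove (fun x e => x ∈ e) x) :=
        sum_congr rfl fun x hx => by
          rw [← G.card_incidenceFinset_eq_degree, G.incidenceFinset_eq_filter, bipartiteAbove,
            filter_filter]
          congr 1
          ext e
          simp only [mem_filter]
          exact ⟨fun h => ⟨h.1, ⟨x, hx, h.2⟩, h.2⟩, fun h => ⟨h.1, h.2.2⟩⟩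
    _ = ∑ e ∈ F, #(T.bipartiteBelow (fun x e => x ∈ e) e) :=
        sum_card_bipartiteAbove_eq_sum_card_bipartiteBelow _
    _ ≤ ∑ _e ∈ F, 2 := sum_le_sum fun e _ => by
        refine (card_le_card fun x hx => Sym2.mem_toFinset.2 (mem_filter.1 hx).2).trans ?_
        rw [Sym2.card_toFinset]
        split <;> omega
    _ = 2 * #F := by rw [sum_const, smul_eq_mul, mul_comm]

def shortcutGraph (η : Sym2 V → Bool) : SimpleGraph V :=
  SimpleGraph.fromEdgeSet {e | η e = true}

def edgesMeeting (T : Finset V) : Finset (Sym2 V) := {e | ∃ x ∈ T, x ∈ e}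

lemma card_edgesMeeting_le (T : Finset V) : #(edgesMeeting T) ≤ #T * Fintype.card V := by
  calc #(edgesMeeting T) ≤ #((T ×ˢ univ).image fun xy : V × V => s(xy.1, xy.2)) :=
        card_le_card fun e he => by
          obtain ⟨x, hx, hxe⟩ := (mem_filter.1 he).2
          exact mem_image.2 ⟨(x, Sym2.Mem.other hxe), mem_product.2 ⟨hx, mem_univ _⟩,
            Sym2.other_spec hxe⟩
    _ ≤ #T * Fintype.card V := card_image_le.trans (by rw [card_product, card_univ])

lemma card_shortcuts_meeting_le (η : Sym2 V → Bool) (T : Finset V) :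
    #{e ∈ (shortcutGraph η).edgeFinset | ∃ x ∈ T, x ∈ e} ≤ #{e ∈ edgesMeeting T | η e = true} :=
  card_le_card fun e he => by
    rw [mem_filter, SimpleGraph.mem_edgeFinset, shortcutGraph,
      SimpleGraph.edgeSet_fromEdgeSet] at he
    exact mem_filter.2 ⟨mem_filter.2 ⟨mem_univ e, he.2⟩, he.1.1⟩

section Ring

variable {n k : ℕ}

lemma card_filter_ringAdj (hkn : 2 * k < n) (x : Fin n) :
    #{y | ringAdj n k x y} = 2 * k := by
  have : NeZero n := ⟨by omega⟩
  have hmem (z : Fin n) : ringAdj n k 0 z ↔ z.val ∈ Icc 1 k ∪ Ico (n - k) n := by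
    rw [ringAdj, sub_zero, zero_sub, Fin.val_neg', Ne, Fin.ext_iff, Fin.val_zero]
    rcases Nat.eq_zero_or_pos z.val with h | h
    · simp [h]; omega
    · rw [Nat.mod_eq_of_lt (by omega)]
      simp only [mem_union, mem_Icc, mem_Ico]
      omega
  calc #{y | ringAdj n k x y} = #{z | ringAdj n k 0 z} :=
        card_equiv (Equiv.subRight x) fun y => by
          simp only [mem_filter, mem_univ, true_and, Equiv.subRight_apply]
          rw [ringAdj, ringAdj, sub_zero, zero_sub, neg_sub, Ne, Ne, eq_comm (a := (0 : Fin n)),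
            sub_eq_zero, eq_comm (a := x)]
    _ = #(Icc 1 k ∪ Ico (n - k) n) :=
        card_bij (fun z _ => z.val) (fun z hz => (hmem z).1 (mem_filter.1 hz).2)
          (fun _ _ _ _ h => Fin.ext h) fun v hv =>
            ⟨⟨v, by simp only [mem_union, mem_Icc, mem_Ico] at hv; omega⟩,
              mem_filter.2 ⟨mem_univ _, (hmem _).2 hv⟩, rfl⟩
    _ = 2 * k := by
        rw [card_union_of_disjoint (disjoint_left.2 fun v h1 h2 => by
          simp only [mem_Icc, mem_Ico] at h1 h2; omega), Nat.card_Icc, Nat.card_Ico]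
        omega

lemma nwGraph_adj_iff (η : Sym2 (Fin n) → Bool) (x y : Fin n) :
    (nwGraph n k η).Adj x y ↔ ringAdj n k x y ∨ (shortcutGraph η).Adj x y := by
  simp only [nwGraph, ringAdj, shortcutGraph, SimpleGraph.fromEdgeSet_adj, Set.mem_ofPred_eq]
  tauto

lemma two_mul_le_gdeg_nwGraph (hkn : 2 * k < n) (η : Sym2 (Fin n) → Bool) (x : Fin n) :
    2 * k ≤ gdeg (nwGraph n k η) x := by
  rw [← card_filter_ringAdj hkn x, gdeg]
  exact card_le_card fun y hy => mem_filter.2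
    ⟨mem_univ y, (nwGraph_adj_iff η x y).2 (Or.inl (mem_filter.1 hy).2)⟩

lemma gdeg_nwGraph_le (hkn : 2 * k < n) (η : Sym2 (Fin n) → Bool) (x : Fin n) :
    gdeg (nwGraph n k η) x ≤ 2 * k + (shortcutGraph η).degree x := by
  rw [← card_filter_ringAdj hkn x, ← gdeg_eq_degree, gdeg, gdeg]
  refine (card_le_card fun y hy => ?_).trans (card_union_le _ _)
  simpa only [mem_union, mem_filter, mem_univ, true_and, nwGraph_adj_iff] using hy

lemma le_two_mul_card_shortcuts_meeting_compl (hk : 1 ≤ k) (hkn : 2 * k < n)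
    (η : Sym2 (Fin n) → Bool) {S : Finset (Fin n)} (hS : 4 * #Sᶜ ≤ n)
    (hle : eTot (nwGraph n k η) S ≤ edgeCount (nwGraph n k η)) :
    n ≤ 2 * #{e ∈ edgesMeeting Sᶜ | η e = true} := by
  set G := nwGraph n k η
  have hcard : #S + #Sᶜ = n := by rw [card_add_card_compl, Fintype.card_fin]
  have hlow : 2 * k * #S ≤ eTot G S := by
    rw [eTot, mul_comm, ← smul_eq_mul, ← sum_const]
    exact sum_le_sum fun x _ => two_mul_le_gdeg_nwGraph hkn η x
  have hup : eTot G Sᶜ ≤ 2 * k * #Sᶜ + ∑ x ∈ Sᶜ, (shortcutGraph η).degree x := by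
    rw [eTot, mul_comm, ← smul_eq_mul, ← sum_const, ← sum_add_distrib]
    exact sum_le_sum fun x _ => gdeg_nwGraph_le hkn η x
  have hshort := (sum_degree_le_two_mul_card_edges_meeting (shortcutGraph η) Sᶜ).trans
    (Nat.mul_le_mul_left 2 (card_shortcuts_meeting_le η Sᶜ))
  have := hlow.trans ((eTot_le_eTot_compl hle).trans hup)
  nlinarith

end Ring

lemma card_compl_lt_of_lt_card {n : ℕ} {β : ℝ} {S : Finset (Fin n)} (hS : (1 - β) * n < #S) :
    (#Sᶜ : ℝ) < β * n := by
  rw [card_compl, Fintype.card_fin, Nat.cast_sub (card_le_univ S |>.trans_eq (Fintype.card_fin n))]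
  linarith

lemma nwPr_exists_large_set_le {n k : ℕ} {p β : ℝ} (hk : 1 ≤ k) (hkn : 2 * k < n)
    (hp₀ : 0 ≤ p) (hp₁ : p ≤ 1) (hβ : β ≤ 1 / 4) :
    nwPr n p (fun η => ∃ S : Finset (Fin n), (1 - β) * n < #S ∧
        eTot (nwGraph n k η) S ≤ edgeCount (nwGraph n k η)) ≤
      2 ^ n * ((⌊β * n⌋₊ * n).choose ((n + 1) / 2) * p ^ ((n + 1) / 2)) := by
  set m := ⌊β * n⌋₊
  set q := (n + 1) / 2
  set small : Finset (Finset (Fin n)) := {T | #T ≤ m}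
  calc _ ≤ ∑ T ∈ small, nwPr n p (fun η => q ≤ #{e ∈ edgesMeeting T | η e = true}) := by
        refine nwPr_le_sum_of_imp hp₀ hp₁ _ _ fun η ⟨S, hS, hle⟩ => ?_
        have hSc := card_compl_lt_of_lt_card hS
        have hSc' : 4 * #Sᶜ ≤ n := by
          have : (4 * #Sᶜ : ℝ) ≤ n := by nlinarith [(n.cast_nonneg : (0 : ℝ) ≤ n)]
          exact_mod_cast this
        refine ⟨Sᶜ, mem_filter.2 ⟨mem_univ _, Nat.le_floor hSc.le⟩, ?_⟩
        have := le_two_mul_card_shortcuts_meeting_compl hk hkn η hSc' hle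
        omega
    _ ≤ ∑ _T ∈ small, ((m * n).choose q * p ^ q : ℝ) := sum_le_sum fun T hT => by
        refine (nwPr_le_choose_mul_pow hp₀ hp₁ _ q).trans ?_
        gcongr
        exact (card_edgesMeeting_le T).trans
          (by rw [Fintype.card_fin]; exact Nat.mul_le_mul_right n (mem_filter.1 hT).2)
    _ ≤ 2 ^ n * ((m * n).choose q * p ^ q) := by
        rw [sum_const, nsmul_eq_mul]
        gcongr
        exact_mod_cast (card_le_univ small).trans_eq (by simp)

lemma choose_mul_pow_le (N q : ℕ) {x : ℝ} (hx : 0 ≤ x) :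
    N.choose q * x ^ q ≤ (Real.exp 1 * N * x / q) ^ q := by
  rcases q.eq_zero_or_pos with rfl | hq
  · simp
  have hq' : (0 : ℝ) < q := by exact_mod_cast hq
  calc N.choose q * x ^ q ≤ N ^ q / q.factorial * x ^ q := by
        gcongr
        exact Nat.choose_le_pow_div q N
    _ = (N * x / q) ^ q * (q ^ q / q.factorial) := by
        rw [mul_div_assoc', div_pow, div_mul_cancel₀ _ (pow_ne_zero _ hq'.ne'), mul_pow,
          mul_div_right_comm]
    _ ≤ (N * x / q) ^ q * Real.exp 1 ^ q := by
        gcongr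
        rw [Real.exp_one_pow]
        exact Real.pow_div_factorial_le_exp _ hq'.le q
    _ = (Real.exp 1 * N * x / q) ^ q := by
        rw [← mul_pow]
        ring

lemma two_pow_mul_choose_mul_pow_le {n m : ℕ} {β c : ℝ} (hn : 0 < n) (hc : 0 ≤ c)
    (hβ : β ≤ 1 / 2) (hβc : 96 * β * c ≤ 1) (hm : (m : ℝ) ≤ β * n) :
    2 ^ n * ((m * n).choose ((n + 1) / 2) * (c / n) ^ ((n + 1) / 2)) ≤ (1 - β) ^ n := by
  set q := (n + 1) / 2
  have hn' : (0 : ℝ) < n := by exact_mod_cast hn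
  have hq : (n : ℝ) ≤ 2 * q := by exact_mod_cast (by omega : n ≤ 2 * q)
  have hx : Real.exp 1 * ↑(m * n) * (c / n) / q ≤ 1 / 16 := by
    have hmc : ((m * n : ℕ) : ℝ) * (c / n) = m * c := by
      push_cast
      field_simp
    calc Real.exp 1 * ↑(m * n) * (c / n) / q = Real.exp 1 * (m * c) / q := by
          rw [mul_assoc, hmc]
      _ ≤ 3 * (β * n * c) / (n / 2) := by
          have hβ₀ : 0 ≤ β := nonneg_of_mul_nonneg_left ((m.cast_nonneg).trans hm) hn'
          gcongr
          · exact Real.exp_one_lt_three.le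
          · linarith
      _ = 6 * β * c := by
          field_simp
          ring
      _ ≤ 1 / 16 := by linarith
  calc 2 ^ n * ((m * n).choose q * (c / n) ^ q)
      ≤ 2 ^ n * (1 / 16) ^ q := by
        gcongr
        refine (choose_mul_pow_le _ _ (by positivity)).trans ?_
        gcongr
    _ = 2 ^ n * (1 / 4) ^ (2 * q) := by rw [pow_mul]; norm_num
    _ ≤ 2 ^ n * (1 / 4) ^ n := by
        gcongr 2 ^ n * ?_
        exact pow_le_pow_of_le_one (by norm_num) (by norm_num) (by omega)
    _ = (1 / 2) ^ n := by rw [← mul_pow]; norm_num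
    _ ≤ (1 - β) ^ n := by gcongr; linarith

/-- **Lemma (expansion of very large sets, general `c`).** Fix `k ≥ 1` and `c > 0`, let
`p = c/n`, and let `H` be an `(n,k,p)` Newman–Watts small world. Then there is
`β = β(c) ∈ (0,1)` such that for all `n` sufficiently large, the probability that some
`S ⊆ [n]` with `|S| > (1−β)n` has `e(S) ≤ |E(H)|` is at most `(1−β)^n`. -/
theorem expansion_of_very_large_sets_general (k : ℕ) (hk : 1 ≤ k) (c : ℝ) (hc : 0 < c) :
    ∃ β : ℝ, 0 < β ∧ β < 1 ∧ ∃ N : ℕ, ∀ n : ℕ, N ≤ n →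
      nwPr n (c / n) (fun η => ∃ S : Finset (Fin n),
        (1 - β) * (n : ℝ) < S.card ∧
        eTot (nwGraph n k η) S ≤ edgeCount (nwGraph n k η)) ≤
      (1 - β) ^ n := by
  -- `96βc ≤ 1` makes the base `2eβc` of the union bound at most `1/16`
  set β : ℝ := 1 / (96 * c + 4)
  have hβ₀ : 0 < β := by positivity
  have hβ : β ≤ 1 / 4 := one_div_le_one_div_of_le (by norm_num) (by linarith)
  have hβc : 96 * β * c ≤ 1 := by
    rw [mul_comm 96, mul_assoc, one_div_mul_eq_div, div_le_one (by positivity)]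
    linarith
  refine ⟨β, hβ₀, by linarith, max (2 * k + 1) ⌈c⌉₊, fun n hn => ?_⟩
  have hkn : 2 * k < n := by omega
  have hcn : c ≤ n := (Nat.le_ceil c).trans (by exact_mod_cast le_of_max_le_right hn)
  calc _ ≤ 2 ^ n * ((⌊β * n⌋₊ * n).choose ((n + 1) / 2) * (c / n) ^ ((n + 1) / 2)) :=
        nwPr_exists_large_set_le hk hkn (by positivity) (div_le_one_of_le₀ hcn n.cast_nonneg) hβ
    _ ≤ (1 - β) ^ n :=
        two_pow_mul_choose_mul_pow_le (by omega) hc.le (by linarith) hβc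
          (Nat.floor_le (by positivity))

end
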